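/- Let G be a finite directed graph with N vertices and integer edge weights (second coordinate) bounded by W, in which every simple cycle C satisfies w₂(C) ≥ -|C|·ε + t for some fixed t > 0 and ε > 0. Then for every K ∈ ℕ there exists k ∈ ℕ such that every path of length k in G satisfies w₂(path) > K - k·ε. -/

import Mathlib

/-!
Add `ε` to every edge weight. Then every simple cycle has weight at least `t`, and every edge
weight is at least `-W`. A walk of length `k > N` revisits a vertex among its first `N + 1`
positions; cutting out the resulting simple cycle (of length at most `N`) removes weight at
least `t` and leaves a walk. Iterating, a walk of length `k` carries at least `k / N - 1` disjoint simple cycles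
plus an acyclic remainder of weight at least `-N·W`, so its shifted weight grows linearly in `k`.
-/

open Finset

namespace WeightedWalk

variable {V : Type*}

def IsWalk (E : V → V → Prop) (π : ℕ → V) (k : ℕ) : Prop :=
  ∀ i < k, E (π i) (π (i + 1))

def walkWeight (w : V → V → ℝ) (π : ℕ → V) (k : ℕ) : ℝ :=
  ∑ i ∈ range k, w (π i) (π (i + 1))

def IsSimpleCycle (E : V → V → Prop) (c : ℕ → V) (n : ℕ) : Prop :=
  1 ≤ n ∧ c n = c 0 ∧ IsWalk E c n ∧ ∀ i < n, ∀ j < n, c i = c j → i = j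

def cutOut (π : ℕ → V) (i n : ℕ) : ℕ → V :=
  fun m => if m < i then π m else π (m + n)

lemma walkWeight_add_const (w : V → V → ℝ) (c : ℝ) (π : ℕ → V) (k : ℕ) :
    walkWeight (fun u v => w u v + c) π k = walkWeight w π k + k * c := by
  simp [walkWeight, sum_add_distrib]

lemma neg_mul_le_walkWeight {E : V → V → Prop} {w : V → V → ℝ} {W : ℝ}
    (hW : ∀ u v, E u v → -W ≤ w u v) {π : ℕ → V} {k : ℕ} (hπ : IsWalk E π k) :
    -(k * W) ≤ walkWeight w π k := by
  have := card_nsmul_le_sum (range k) _ (-W) fun i hi => hW _ _ (hπ i (mem_range.mp hi))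
  simpa [walkWeight] using this

lemma cutOut_of_lt {π : ℕ → V} {i m : ℕ} (n : ℕ) (hm : m < i) : cutOut π i n m = π m :=
  if_pos hm

lemma cutOut_add {π : ℕ → V} (i n m : ℕ) : cutOut π i n (i + m) = π (i + n + m) := by
  simp only [cutOut, if_neg (Nat.not_lt.mpr (Nat.le_add_right i m))]
  congr 1
  omega

lemma cutOut_succ_of_lt {π : ℕ → V} {i n m : ℕ} (hrep : π (i + n) = π i) (hm : m < i) :
    cutOut π i n (m + 1) = π (m + 1) := by
  rcases Nat.lt_or_ge (m + 1) i with h | h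
  · exact cutOut_of_lt n h
  · obtain rfl : m + 1 = i := by omega
    simpa using (cutOut_add (π := π) (m + 1) n 0).trans hrep

lemma IsWalk.cutOut {E : V → V → Prop} {π : ℕ → V} {i n r : ℕ} (hπ : IsWalk E π (i + n + r))
    (hrep : π (i + n) = π i) : IsWalk E (cutOut π i n) (i + r) := by
  intro m hm
  rcases Nat.lt_or_ge m i with h | h
  · rw [cutOut_of_lt n h, cutOut_succ_of_lt hrep h]
    exact hπ m (by omega)
  · obtain ⟨m, rfl⟩ := Nat.exists_eq_add_of_le h
    have := hπ (i + n + m) (by omega)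
    rwa [cutOut_add, add_assoc i m 1, cutOut_add, ← add_assoc]

lemma walkWeight_eq_add_cutOut (w : V → V → ℝ) {π : ℕ → V} {i n : ℕ} (hrep : π (i + n) = π i)
    (r : ℕ) : walkWeight w π (i + n + r) =
      walkWeight w (fun m => π (i + m)) n + walkWeight w (cutOut π i n) (i + r) := by
  have head : ∑ m ∈ range i, w (cutOut π i n m) (cutOut π i n (m + 1)) =
      ∑ m ∈ range i, w (π m) (π (m + 1)) := by
    refine sum_congr rfl fun m hm => ?_
    rw [cutOut_of_lt n (mem_range.mp hm), cutOut_succ_of_lt hrep (mem_range.mp hm)]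
  have tail : ∑ m ∈ range r, w (cutOut π i n (i + m)) (cutOut π i n (i + m + 1)) =
      ∑ m ∈ range r, w (π (i + n + m)) (π (i + n + m + 1)) := by
    refine sum_congr rfl fun m _ => ?_
    rw [cutOut_add, add_assoc i m 1, cutOut_add, ← add_assoc]
  simp only [walkWeight, sum_range_add, head, tail, ← add_assoc]
  ring

lemma exists_simple_cycle_segment [Fintype V] (π : ℕ → V) :
    ∃ i n, 0 < n ∧ i + n ≤ Fintype.card V ∧ π (i + n) = π i ∧
      ∀ p < n, ∀ q < n, π (i + p) = π (i + q) → p = q := by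
  classical
  obtain ⟨j₀, hj₀, hrep₀⟩ : ∃ j ≤ Fintype.card V, ∃ i < j, π i = π j := by
    obtain ⟨a, b, hab, hπab⟩ := Fintype.exists_ne_map_eq_of_card_lt
      (fun m : Fin (Fintype.card V + 1) => π m) (by simp)
    rcases Nat.lt_or_gt_of_ne (Fin.val_ne_of_ne hab) with h | h
    · exact ⟨b, b.is_le, a, h, hπab⟩
    · exact ⟨a, a.is_le, b, h, hπab.symm⟩
  have hex : ∃ j, ∃ i < j, π i = π j := ⟨j₀, hrep₀⟩
  set j := Nat.find hex
  obtain ⟨i, hij, hπij⟩ := Nat.find_spec hex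
  have hfirst : ∀ m < j, ∀ l < m, π l ≠ π m := fun m hm => by
    simpa using Nat.find_min hex hm
  refine ⟨i, j - i, by omega, ?_, ?_, ?_⟩
  · have := Nat.find_min' hex hrep₀
    omega
  · rw [Nat.add_sub_cancel' hij.le]
    exact hπij.symm
  · intro p hp q hq hpq
    by_contra hne
    rcases Nat.lt_or_gt_of_ne hne with h | h
    · exact hfirst (i + q) (by omega) (i + p) (by omega) hpq
    · exact hfirst (i + p) (by omega) (i + q) (by omega) hpq.symm

lemma mul_le_walkWeight [Fintype V] {E : V → V → Prop} {w : V → V → ℝ} {W t : ℝ}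
    (hW₀ : 0 ≤ W) (ht : 0 ≤ t) (hW : ∀ u v, E u v → -W ≤ w u v)
    (hcyc : ∀ c n, IsSimpleCycle E c n → t ≤ walkWeight w c n) (k : ℕ) (π : ℕ → V)
    (hπ : IsWalk E π k) :
    k * t ≤ Fintype.card V * (walkWeight w π k + t + Fintype.card V * W) := by
  induction k using Nat.strong_induction_on generalizing π with
  | _ k ih =>
  set N := Fintype.card V
  rcases le_or_gt k N with hk | hk
  · have hkN : (k : ℝ) ≤ N := by exact_mod_cast hk
    have hacyclic : 0 ≤ walkWeight w π k + N * W := by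
      linarith [neg_mul_le_walkWeight hW hπ, mul_le_mul_of_nonneg_right hkN hW₀]
    linarith [mul_le_mul_of_nonneg_right hkN ht, mul_nonneg (Nat.cast_nonneg N) hacyclic]
  · obtain ⟨i, n, hn, hlen, hrep, hinj⟩ := exists_simple_cycle_segment π
    obtain ⟨r, rfl⟩ : ∃ r, k = i + n + r := ⟨k - (i + n), by omega⟩
    have hcycle : t ≤ walkWeight w (fun m => π (i + m)) n :=
      hcyc _ _ ⟨hn, by simpa using hrep,
        fun m hm => by simpa [add_assoc] using hπ (i + m) (by omega), hinj⟩
    have hrest := ih (i + r) (by omega) _ (hπ.cutOut hrep)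
    have hnN : (n : ℝ) ≤ N := by exact_mod_cast (by omega : n ≤ N)
    rw [walkWeight_eq_add_cutOut w hrep]
    push_cast at hrest ⊢
    linarith [mul_le_mul_of_nonneg_right hnN ht,
      mul_le_mul_of_nonneg_left hcycle (Nat.cast_nonneg N)]

end WeightedWalk

open WeightedWalk

/-- In a finite directed graph with `N` vertices whose (second-coordinate) edge
weights are bounded in absolute value by `W`, if every simple cycle `C` satisfies
`w₂(C) ≥ -|C|·ε + t` for fixed `t > 0` and `ε > 0`, then for every `K` there is a
length `k` such that every path of length `k` has second-coordinate weight
`> K - k·ε`. -/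
theorem accumulate_weight {V : Type*} [Fintype V]
    (E : V → V → Prop) (w₂ : V → V → ℤ)
    (W : ℕ) (hW : ∀ u v : V, E u v → |w₂ u v| ≤ (W : ℤ))
    (ε t : ℝ) (hε : 0 < ε) (ht : 0 < t)
    (hcyc : ∀ (n : ℕ) (c : ℕ → V), 1 ≤ n → c n = c 0 →
      (∀ i < n, E (c i) (c (i + 1))) →
      (∀ i < n, ∀ j < n, c i = c j → i = j) →
      -(n : ℝ) * ε + t ≤ ((∑ i ∈ Finset.range n, w₂ (c i) (c (i + 1)) : ℤ) : ℝ)) :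
    ∀ K : ℕ, ∃ k : ℕ, ∀ π : ℕ → V,
      (∀ i < k, E (π i) (π (i + 1))) →
      (K : ℝ) - k * ε < ((∑ i ∈ Finset.range k, w₂ (π i) (π (i + 1)) : ℤ) : ℝ) := by
  intro K
  set N := Fintype.card V
  have hcast : ∀ c n, walkWeight (fun u v => (w₂ u v : ℝ)) c n =
      ((∑ i ∈ Finset.range n, w₂ (c i) (c (i + 1)) : ℤ) : ℝ) := by
    simp [walkWeight]
  have hedge : ∀ u v, E u v → -(W : ℝ) ≤ w₂ u v + ε := fun u v huv => by
    have : -(W : ℝ) ≤ w₂ u v := by exact_mod_cast (abs_le.mp (hW u v huv)).1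
    linarith
  have hcycle : ∀ c n, IsSimpleCycle E c n → t ≤ walkWeight (fun u v => w₂ u v + ε) c n :=
    fun c n ⟨hn, hclosed, hwalk, hinj⟩ => by
      rw [walkWeight_add_const, hcast]
      linarith [hcyc n c hn hclosed hwalk hinj]
  obtain ⟨k, hk⟩ := exists_nat_gt (N * (K + t + N * W) / t)
  refine ⟨k, fun π hπ => ?_⟩
  have hbound := mul_le_walkWeight (Nat.cast_nonneg W) ht.le hedge hcycle k π hπ
  rw [walkWeight_add_const, hcast] at hbound
  have hK := lt_of_mul_lt_mul_left (((div_lt_iff₀ ht).mp hk).trans_le hbound) (Nat.cast_nonneg N)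
  linarith
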